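/- Let α > 0 and let g̃ be holomorphic on an open set U ⊆ ℂ. Define g = φ_α^{-1} ∘ g̃ ∘ φ_α on φ_α^{-1}(U) and suppose p = (x,y) with x ≠ 0 and g₁(p) ≠ 0 (where g = (g₁,g₂)). Then at p, the Grushin Wirtinger derivative satisfies W̄g(p) = |x|^α · (∂g̃/∂z̄)(φ_α(p)) = 0. -/

import Mathlib

/-!
Write `k(v) = v|v|^α/(α+1)` and `h` for its inverse, so that `φ_α = k × id` and
`g = (h ∘ Re F, Im F)` with `F = g̃ ∘ φ_α`. Since `k'(v) = |v|^α` for every `v`, the inverse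
function theorem gives `h'(u) = |h(u)|^{-α}`, and this factor is exactly cancelled by the weight
`|g₁|^α` in `W̄`. What remains is `|x|^α (∂ₓg̃ + i ∂_y g̃)`, which vanishes by the Cauchy–Riemann
equations.
-/

open Complex Asymptotics Filter Topology

noncomputable section

def meyersonReal (α v : ℝ) : ℝ := v * |v| ^ α / (α + 1)

def meyersonRealInv (α u : ℝ) : ℝ := Real.sign u * ((α + 1) * |u|) ^ (1 / (α + 1))

def meyerson (α : ℝ) (q : ℝ × ℝ) : ℂ := meyersonReal α q.1 + q.2 * I

def meyersonInv (α : ℝ) (z : ℂ) : ℝ × ℝ := (meyersonRealInv α z.re, z.im)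

def wirtingerDbar (f : ℂ → ℂ) (z : ℂ) : ℂ := (fderiv ℝ f z 1 + I * fderiv ℝ f z I) / 2

def grushinDbar (α : ℝ) (g : ℝ × ℝ → ℝ × ℝ) (p : ℝ × ℝ) : ℂ :=
  ((|(g p).1| ^ α * fderiv ℝ (fun q => (g q).1) p (1, 0) -
      |p.1| ^ α * fderiv ℝ (fun q => (g q).2) p (0, 1) : ℝ) : ℂ) +
    ((fderiv ℝ (fun q => (g q).2) p (1, 0) +
      |p.1 * (g p).1| ^ α * fderiv ℝ (fun q => (g q).1) p (0, 1) : ℝ) : ℂ) * I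

end

theorem Real.sign_eq_signType_sign (r : ℝ) : Real.sign r = SignType.sign r := by
  rcases lt_trichotomy r 0 with h | rfl | h
  · simp [Real.sign_of_neg h, _root_.sign_neg h]
  · simp
  · simp [Real.sign_of_pos h, _root_.sign_pos h]

theorem Real.abs_sign_of_ne_zero {r : ℝ} (hr : r ≠ 0) : |Real.sign r| = 1 := by
  rcases Real.sign_apply_eq_of_ne_zero r hr with h | h <;> simp [h]

theorem Real.continuousAt_sign {r : ℝ} (hr : r ≠ 0) : ContinuousAt Real.sign r := by
  simp only [funext Real.sign_eq_signType_sign]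
  exact (continuous_of_discreteTopology (f := fun s : SignType => (s : ℝ))).continuousAt.comp
    (continuousAt_sign_of_ne_zero hr)

theorem hasDerivAt_meyersonReal_of_ne_zero {α : ℝ} (hα : α ≠ -1) {w : ℝ} (hw : w ≠ 0) :
    HasDerivAt (meyersonReal α) (|w| ^ α) w := by
  have hpow := (hasDerivAt_abs hw).rpow_const (p := α) (Or.inl (abs_ne_zero.mpr hw))
  refine (((hasDerivAt_id' w).mul hpow).div_const (α + 1)).congr_deriv ?_
  have hα' : α + 1 ≠ 0 := by contrapose! hα; linarith
  have hw' : |w| ≠ 0 := abs_ne_zero.mpr hw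
  rw [Real.rpow_sub_one hw']
  field_simp
  linear_combination α * self_mul_sign w

theorem hasDerivAt_meyersonReal_zero {α : ℝ} (hα : 0 < α) :
    HasDerivAt (meyersonReal α) 0 0 := by
  refine .of_isLittleO ?_
  have hlim : Tendsto (fun v : ℝ => |v| ^ α / (α + 1)) (𝓝 0) (𝓝 0) := by
    convert ((continuous_abs.rpow_const fun _ => Or.inr hα.le).div_const (α + 1)).tendsto 0
    simp [Real.zero_rpow hα.ne']
  simpa [meyersonReal, mul_div_assoc] using
    (isBigO_refl (fun v : ℝ => v) (𝓝 0)).mul_isLittleO ((isLittleO_one_iff ℝ).mpr hlim)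

theorem hasDerivAt_meyersonReal {α : ℝ} (hα : 0 < α) (w : ℝ) :
    HasDerivAt (meyersonReal α) (|w| ^ α) w := by
  rcases eq_or_ne w 0 with rfl | hw
  · simpa [Real.zero_rpow hα.ne'] using hasDerivAt_meyersonReal_zero hα
  · exact hasDerivAt_meyersonReal_of_ne_zero (by linarith) hw

theorem abs_meyersonRealInv {α : ℝ} (hα : -1 < α) (u : ℝ) :
    |meyersonRealInv α u| = ((α + 1) * |u|) ^ (1 / (α + 1)) := by
  have hα' : 0 < α + 1 := by linarith
  rcases eq_or_ne u 0 with rfl | hu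
  · simp [meyersonRealInv, Real.zero_rpow (inv_pos.mpr hα').ne']
  rw [meyersonRealInv, abs_mul, Real.abs_sign_of_ne_zero hu, one_mul,
    abs_of_nonneg (Real.rpow_nonneg (by positivity) _)]

theorem meyersonReal_meyersonRealInv {α : ℝ} (hα : -1 < α) (u : ℝ) :
    meyersonReal α (meyersonRealInv α u) = u := by
  have hα' : 0 < α + 1 := by linarith
  have hpos : 0 ≤ (α + 1) * |u| := by positivity
  have hexp : 1 / (α + 1) + 1 / (α + 1) * α = 1 := by field_simp; ring
  rw [meyersonReal, abs_meyersonRealInv hα, meyersonRealInv, mul_assoc, ← Real.rpow_mul hpos,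
    ← Real.rpow_add' hpos (by rw [hexp]; exact one_ne_zero), hexp, Real.rpow_one,
    Real.sign_eq_signType_sign]
  field_simp
  exact sign_mul_abs u

theorem continuousAt_meyersonRealInv {α : ℝ} (hα : -1 < α) {u : ℝ} (hu : u ≠ 0) :
    ContinuousAt (meyersonRealInv α) u := by
  have hexp : 0 ≤ 1 / (α + 1) := by
    have : 0 < α + 1 := by linarith
    positivity
  exact (Real.continuousAt_sign hu).mul
    ((continuous_const.mul continuous_abs).rpow_const fun _ => Or.inr hexp).continuousAt

theorem hasDerivAt_meyersonRealInv {α : ℝ} (hα : -1 < α) {u : ℝ}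
    (hu : meyersonRealInv α u ≠ 0) :
    HasDerivAt (meyersonRealInv α) (|meyersonRealInv α u| ^ α)⁻¹ u := by
  have hu' : u ≠ 0 := by rintro rfl; simp [meyersonRealInv] at hu
  exact .of_local_left_inverse (continuousAt_meyersonRealInv hα hu')
    (hasDerivAt_meyersonReal_of_ne_zero hα.ne' hu) (by positivity)
    (.of_forall (meyersonReal_meyersonRealInv hα))

theorem hasFDerivAt_meyerson {α : ℝ} (hα : 0 < α) (p : ℝ × ℝ) :
    HasFDerivAt (meyerson α) ((ContinuousLinearMap.fst ℝ ℝ ℝ).smulRight ((|p.1| ^ α : ℝ) : ℂ) +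
      (ContinuousLinearMap.snd ℝ ℝ ℝ).smulRight I) p := by
  have h1 := (hasDerivAt_meyersonReal hα p.1).ofReal_comp.hasFDerivAt.comp p hasFDerivAt_fst
  have h2 := (ofRealCLM.hasFDerivAt.comp p hasFDerivAt_snd).mul_const I
  refine (h1.add h2).congr_fderiv ?_
  ext <;> simp

theorem DifferentiableAt.wirtingerDbar_eq_zero {f : ℂ → ℂ} {z : ℂ}
    (hf : DifferentiableAt ℂ f z) : wirtingerDbar f z = 0 := by
  have hI : fderiv ℂ f z I = I * fderiv ℂ f z 1 := by
    rw [← smul_eq_mul, ← map_smul, smul_eq_mul, mul_one]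
  simp [wirtingerDbar, hf.fderiv_restrictScalars ℝ, hI, ← mul_assoc]

theorem grushinDbar_meyersonInv_comp_comp_meyerson {α : ℝ} (hα : 0 < α) {f : ℂ → ℂ}
    {p : ℝ × ℝ} (hf : DifferentiableAt ℝ f (meyerson α p))
    (hg : meyersonRealInv α (f (meyerson α p)).re ≠ 0) :
    grushinDbar α (meyersonInv α ∘ f ∘ meyerson α) p =
      2 * ((|p.1| ^ α : ℝ) : ℂ) * wirtingerDbar f (meyerson α p) := by
  have hF := hf.hasFDerivAt.comp p (hasFDerivAt_meyerson hα p)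
  have h1 := (hasDerivAt_meyersonRealInv (by linarith) hg).comp_hasFDerivAt p
    (reCLM.hasFDerivAt.comp p hF)
  have h2 := imCLM.hasFDerivAt.comp p hF
  have e1 : fderiv ℝ (fun q => ((meyersonInv α ∘ f ∘ meyerson α) q).1) p = _ := h1.fderiv
  have e2 : fderiv ℝ (fun q => ((meyersonInv α ∘ f ∘ meyerson α) q).2) p = _ := h2.fderiv
  have hA : fderiv ℝ f (meyerson α p) (|p.1| ^ α : ℝ) =
      |p.1| ^ α • fderiv ℝ f (meyerson α p) 1 := by
    rw [← map_smul]; simp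
  have hg' : |meyersonRealInv α (f (meyerson α p)).re| ^ α ≠ 0 := by positivity
  rw [grushinDbar, wirtingerDbar, e1, e2]
  apply Complex.ext
  · simp [hA, meyersonInv]
    field_simp
    ring
  · simp [hA, meyersonInv, abs_mul, Real.mul_rpow]
    field_simp

theorem grushin_conjugate_antiholomorphic_vanishes_general (α : ℝ) (hα : 0 < α)
    (U : Set ℂ) (hU : IsOpen U) (gt : ℂ → ℂ) (hgt : DifferentiableOn ℂ gt U)
    (φ : ℝ × ℝ → ℂ)
    (hφ : ∀ q : ℝ × ℝ, φ q = Complex.ofReal (q.1 * |q.1| ^ α / (α + 1)) +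
      Complex.ofReal q.2 * Complex.I)
    (ψ : ℂ → ℝ × ℝ)
    (hψ : ∀ z : ℂ, ψ z = (Real.sign z.re * ((α + 1) * |z.re|) ^ (1 / (α + 1)), z.im))
    (g : ℝ × ℝ → ℝ × ℝ) (hg : ∀ q : ℝ × ℝ, g q = ψ (gt (φ q)))
    (p : ℝ × ℝ) (hpU : φ p ∈ U) (hg1 : (g p).1 ≠ 0) :
    Complex.ofReal (|(g p).1| ^ α * fderiv ℝ (fun q => (g q).1) p (1, 0) -
        |p.1| ^ α * fderiv ℝ (fun q => (g q).2) p (0, 1)) +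
      Complex.ofReal (fderiv ℝ (fun q => (g q).2) p (1, 0) +
        |p.1 * (g p).1| ^ α * fderiv ℝ (fun q => (g q).1) p (0, 1)) * Complex.I =
      Complex.ofReal (|p.1| ^ α) *
        ((fderiv ℝ gt (φ p) 1 + Complex.I * fderiv ℝ gt (φ p) Complex.I) / 2) ∧
    Complex.ofReal (|(g p).1| ^ α * fderiv ℝ (fun q => (g q).1) p (1, 0) -
        |p.1| ^ α * fderiv ℝ (fun q => (g q).2) p (0, 1)) +
      Complex.ofReal (fderiv ℝ (fun q => (g q).2) p (1, 0) +
        |p.1 * (g p).1| ^ α * fderiv ℝ (fun q => (g q).1) p (0, 1)) * Complex.I = 0 := by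
  obtain rfl : φ = meyerson α := funext hφ
  obtain rfl : ψ = meyersonInv α := funext hψ
  obtain rfl : g = meyersonInv α ∘ gt ∘ meyerson α := funext hg
  have hgt' : DifferentiableAt ℂ gt (meyerson α p) := hgt.differentiableAt (hU.mem_nhds hpU)
  have hdbar : wirtingerDbar gt (meyerson α p) = 0 := hgt'.wirtingerDbar_eq_zero
  have hW : grushinDbar α (meyersonInv α ∘ gt ∘ meyerson α) p = 0 := by
    rw [grushinDbar_meyersonInv_comp_comp_meyerson hα (hgt'.restrictScalars ℝ) hg1, hdbar,
      mul_zero]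
  change grushinDbar α _ p = _ * wirtingerDbar gt (meyerson α p) ∧ grushinDbar α _ p = 0
  rw [hdbar, mul_zero]
  exact ⟨hW, hW⟩

/-- If `g̃` is holomorphic on an open `U ⊆ ℂ` and `g = φ_α⁻¹ ∘ g̃ ∘ φ_α`, then at a
point `p` with `p.1 ≠ 0` and `g₁(p) ≠ 0` one has
`W̄g(p) = |p.1|^α · (∂g̃/∂z̄)(φ_α(p)) = 0`. -/
theorem grushin_conjugate_antiholomorphic_vanishes (α : ℝ) (hα : 0 < α)
    (U : Set ℂ) (hU : IsOpen U) (gt : ℂ → ℂ) (hgt : DifferentiableOn ℂ gt U)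
    (φ : ℝ × ℝ → ℂ)
    (hφ : ∀ q : ℝ × ℝ, φ q = Complex.ofReal (q.1 * |q.1| ^ α / (α + 1)) +
      Complex.ofReal q.2 * Complex.I)
    (ψ : ℂ → ℝ × ℝ)
    (hψ : ∀ z : ℂ, ψ z = (Real.sign z.re * ((α + 1) * |z.re|) ^ (1 / (α + 1)), z.im))
    (g : ℝ × ℝ → ℝ × ℝ) (hg : ∀ q : ℝ × ℝ, g q = ψ (gt (φ q)))
    (p : ℝ × ℝ) (hpU : φ p ∈ U) (hx : p.1 ≠ 0) (hg1 : (g p).1 ≠ 0) :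
    Complex.ofReal (|(g p).1| ^ α * fderiv ℝ (fun q => (g q).1) p (1, 0) -
        |p.1| ^ α * fderiv ℝ (fun q => (g q).2) p (0, 1)) +
      Complex.ofReal (fderiv ℝ (fun q => (g q).2) p (1, 0) +
        |p.1 * (g p).1| ^ α * fderiv ℝ (fun q => (g q).1) p (0, 1)) * Complex.I =
      Complex.ofReal (|p.1| ^ α) *
        ((fderiv ℝ gt (φ p) 1 + Complex.I * fderiv ℝ gt (φ p) Complex.I) / 2) ∧
    Complex.ofReal (|(g p).1| ^ α * fderiv ℝ (fun q => (g q).1) p (1, 0) -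
        |p.1| ^ α * fderiv ℝ (fun q => (g q).2) p (0, 1)) +
      Complex.ofReal (fderiv ℝ (fun q => (g q).2) p (1, 0) +
        |p.1 * (g p).1| ^ α * fderiv ℝ (fun q => (g q).1) p (0, 1)) * Complex.I = 0 :=
  grushin_conjugate_antiholomorphic_vanishes_general α hα U hU gt hgt φ hφ ψ hψ g hg p hpU hg1
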